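/- Let t be a natural number and let W_t = S_t ⋉ {±1}^t with the subgroup S_t. Then the induced representation Ind_{S_t}^{W_t} 1 of the trivial character decomposes multiplicity-freely as the direct sum over pairs (c,d) with c + d = t of the irreducible W_t-representations labeled by the bipartition ([c]_row, [d]_row), i.e., the pair consisting of the single-row partition of size c and the single-row partition of size d. -/

import Mathlib

open scoped Classical

/-- The permutation action of `Equiv.Perm (Fin t)` on sign vectors. -/
def permAut (n : ℕ) : Equiv.Perm (Fin n) →* MulAut (Fin n → ℤˣ) where
  toFun s :=
    { toFun := fun x => x ∘ s.symm
      invFun := fun x => x ∘ s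
      left_inv := by intro x; funext i; simp
      right_inv := by intro x; funext i; simp
      map_mul' := by intro x y; rfl }
  map_one' := by ext x i; rfl
  map_mul' := by intro s t; ext x i; rfl

/-- The hyperoctahedral group `W_t = S_t ⋉ {±1}^t`. -/
abbrev HyperW (n : ℕ) : Type := (Fin n → ℤˣ) ⋊[permAut n] Equiv.Perm (Fin n)

noncomputable instance instFintypeHyperW (n : ℕ) : Fintype (HyperW n) :=
  Fintype.ofEquiv ((Fin n → ℤˣ) × Equiv.Perm (Fin n))
    { toFun := fun p => ⟨p.1, p.2⟩
      invFun := fun w => (w.left, w.right)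
      left_inv := fun _ => rfl
      right_inv := fun _ => rfl }

/-- The induced character `Ind_K^G η`, for a subgroup of `G` presented as the
image of an (injective) homomorphism `Φ : K →* G` and a character `η` of `K`. -/
noncomputable def inducedCharOf {K G : Type*} [Group K] [Fintype K] [Group G] [Fintype G]
    (Φ : K →* G) (η : K → ℂ) : G → ℂ :=
  fun g => (Fintype.card K : ℂ)⁻¹ * ∑ x : G, ∑ k : K, if x⁻¹ * g * x = Φ k then η k else 0

/-- A function `G → ℂ` is an irreducible character if it is the character of
some irreducible (simple) finite-dimensional complex representation of `G`. -/
def IsIrredChar (G : Type) [Group G] (χ : G → ℂ) : Prop :=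
  ∃ V : FDRep ℂ G, CategoryTheory.Simple V ∧ χ = FDRep.character V

/-!
For `d ≤ t`, `W_t` acts on functions on the `d`-subsets of `Fin t` by
`((v, s) • f) S = (∏ i ∈ S, v i) * f (s⁻¹ • S)`; this is the representation labelled
`([t - d]_row, [d]_row)`. Its character at `(v, s)` is the sum of the sign characters
`v ↦ ∏ i ∈ S, v i` over the `s`-stable `d`-subsets `S`. Orthogonality of the sign characters
of `{±1}^t`, together with Burnside's lemma for the transitive action of `S_t` on `d`-subsets,
shows that this character has norm one, so the representation is irreducible; pairing its
restriction to `{±1}^t` with a sign character recovers `d`. On the other side,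
`Ind 1 (v, s)` counts the `y ∈ {±1}^t` with `y⁻¹ * v * s(y) = 1`; expanding the indicator of `1`
in sign characters turns this count into the sum of `∏ i ∈ S, v i` over all `s`-stable
subsets `S`, which is the sum of the characters over `d`.
-/

open Finset
open scoped Pointwise

namespace SignVector

variable {α : Type*}

def signChar (S : Finset α) : (α → ℤˣ) →* ℂ where
  toFun x := ∏ i ∈ S, ((x i : ℤ) : ℂ)
  map_one' := by simp
  map_mul' x y := by simp [prod_mul_distrib]

lemma signChar_apply (S : Finset α) (x : α → ℤˣ) :
    signChar S x = ∏ i ∈ S, ((x i : ℤ) : ℂ) := rfl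

lemma signChar_inv (S : Finset α) (x : α → ℤˣ) : signChar S x⁻¹ = signChar S x := by
  simp [signChar_apply]

lemma signChar_mul_self (S : Finset α) (x : α → ℤˣ) : signChar S x * signChar S x = 1 := by
  rw [← map_mul, show x * x = 1 from funext fun i => Int.units_mul_self (x i), map_one]

lemma signChar_comp_perm [DecidableEq α] (S : Finset α) (x : α → ℤˣ) (e : Equiv.Perm α) :
    signChar S (x ∘ e) = signChar (e • S) x := by
  rw [smul_finset_def, signChar_apply, signChar_apply,
    prod_image fun a _ b _ h => MulAction.injective e h]
  rfl

lemma signChar_mulSingle_neg_one [DecidableEq α] (S : Finset α) (i : α) :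
    signChar S (Pi.mulSingle i (-1)) = if i ∈ S then -1 else 1 := by
  by_cases hi : i ∈ S <;> simp [signChar_apply, Pi.mulSingle_apply, apply_ite, prod_ite_eq', hi]

lemma signChar_mul_signChar_eq_one_iff [DecidableEq α] (S T : Finset α) :
    signChar S * signChar T = 1 ↔ S = T := by
  refine ⟨fun h => ?_, fun h => ?_⟩
  · ext i
    have hi := DFunLike.congr_fun h (Pi.mulSingle i (-1))
    simp only [MonoidHom.mul_apply, signChar_mulSingle_neg_one, MonoidHom.one_apply] at hi
    split_ifs at hi <;> norm_num at hi <;> tauto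
  · subst h
    ext x
    exact signChar_mul_self S x

lemma sum_signChar_mul_signChar [Fintype α] [DecidableEq α] (S T : Finset α) :
    ∑ x : α → ℤˣ, signChar S x * signChar T x =
      if S = T then (2 : ℂ) ^ Fintype.card α else 0 := by
  have sum_hom := sum_hom_units (signChar S * signChar T)
  simp only [MonoidHom.mul_apply, signChar_mul_signChar_eq_one_iff] at sum_hom
  rw [sum_hom]
  split_ifs <;> simp [Fintype.card_pi]

lemma sum_signChar [Fintype α] (w : α → ℤˣ) :
    ∑ S : Finset α, signChar S w = if w = 1 then (2 : ℂ) ^ Fintype.card α else 0 := by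
  have expand : ∑ S : Finset α, signChar S w = ∏ i, (1 + ((w i : ℤ) : ℂ)) := by
    rw [prod_one_add, powerset_univ]; rfl
  rw [expand]
  split_ifs with hw
  · simp [hw, one_add_one_eq_two]
  · obtain ⟨i, hi⟩ : ∃ i, w i = -1 := by
      by_contra! h
      exact hw (funext fun i => (Int.units_eq_one_or (w i)).resolve_right (h i))
    exact prod_eq_zero (mem_univ i) (by simp [hi])

end SignVector

open SignVector

lemma LinearMap.trace_eq_sum_of_apply_eq_mul_comp {R X : Type*} [CommRing R] [Fintype X]
    [DecidableEq X] (L : (X → R) →ₗ[R] (X → R)) (c : X → R) (π : X → X)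
    (hL : ∀ f x, L f x = c x * f (π x)) :
    LinearMap.trace R _ L = ∑ x, if π x = x then c x else 0 := by
  rw [LinearMap.trace_eq_matrix_trace R (Pi.basisFun R X), Matrix.trace]
  refine sum_congr rfl fun x _ => ?_
  simp [hL, Pi.single_apply]

lemma MulAction.sum_card_filter_smul_eq_self (G X : Type*) [Group G] [Fintype G]
    [MulAction G X] [Fintype X] [DecidableEq X] [Nonempty X] [IsPretransitive G X] :
    ∑ g : G, #{x : X | g • x = x} = Fintype.card G := by
  obtain ⟨_⟩ := (pretransitive_iff_unique_quotient_of_nonempty G X).1 inferInstance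
  calc ∑ g : G, #{x : X | g • x = x} = ∑ g : G, Fintype.card (fixedBy X g) :=
        sum_congr rfl fun g _ => (Fintype.card_ofFinset _ fun x => by simp [fixedBy]).symm
    _ = Fintype.card G := by
      rw [sum_card_fixedBy_eq_card_orbits_mul_card_group, Fintype.card_unique, one_mul]

lemma inducedCharOf_one_apply {K G : Type*} [Group K] [Fintype K] [Group G] [Fintype G]
    [DecidableEq G]
    {Φ : K →* G} (hΦ : Function.Injective Φ) (g : G) :
    inducedCharOf Φ (fun _ => 1) g =
      (Fintype.card K : ℂ)⁻¹ * #{x | x⁻¹ * g * x ∈ Φ.range} := by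
  rw [inducedCharOf, natCast_card_filter]
  congr 1
  refine sum_congr rfl fun x _ => ?_
  split_ifs with hx
  · obtain ⟨k, hk⟩ := hx
    simp [← hk, hΦ.eq_iff]
  · exact sum_eq_zero fun k _ => if_neg fun h => hx ⟨k, h.symm⟩

namespace SemidirectProduct

variable {N G : Type*} [Group N] [Group G] {φ : G →* MulAut N}

lemma mem_range_inr_iff (x : N ⋊[φ] G) : x ∈ (inr : G →* N ⋊[φ] G).range ↔ x.left = 1 :=
  ⟨by rintro ⟨k, rfl⟩; rfl, fun h => ⟨x.right, SemidirectProduct.ext h.symm rfl⟩⟩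

lemma inv_mul_mul_mem_range_inr_iff (g x : N ⋊[φ] G) :
    x⁻¹ * g * x ∈ (inr : G →* N ⋊[φ] G).range ↔
      x.left⁻¹ * g.left * φ g.right x.left = 1 := by
  rw [mem_range_inr_iff, mul_left, mul_right, mul_left, inv_left, inv_right, map_mul φ,
    MulAut.mul_apply, ← map_mul, ← map_mul, MulEquiv.map_eq_one_iff]

lemma sum_eq_sum_sum [Fintype N] [Fintype G] [Fintype (N ⋊[φ] G)] {M : Type*}
    [AddCommMonoid M] (f : N ⋊[φ] G → M) : ∑ x, f x = ∑ h : G, ∑ n : N, f ⟨n, h⟩ :=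
  (Fintype.sum_equiv equivProd _ (fun p => f ⟨p.1, p.2⟩) fun _ => rfl).trans
    (Fintype.sum_prod_type_right _)

lemma card_filter_inv_mul_mul_mem_range_inr [Fintype N] [Fintype G] [DecidableEq N]
    [DecidableEq G] [Fintype (N ⋊[φ] G)] (g : N ⋊[φ] G) :
    #{x | x⁻¹ * g * x ∈ (inr : G →* N ⋊[φ] G).range} =
      Fintype.card G * #{n | n⁻¹ * g.left * φ g.right n = 1} := by
  simp_rw [inv_mul_mul_mem_range_inr_iff]
  rw [mul_comm, ← card_univ (α := G), ← card_product]
  exact card_equiv equivProd fun x => by simp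

end SemidirectProduct

namespace HyperW

lemma signChar_permAut {t : ℕ} (S : Finset (Fin t)) (s : Equiv.Perm (Fin t))
    (x : Fin t → ℤˣ) :
    signChar S (permAut t s x) = signChar (s⁻¹ • S) x :=
  signChar_comp_perm S x s⁻¹

lemma natCard_eq (t : ℕ) : Nat.card (HyperW t) = 2 ^ t * t.factorial := by
  rw [SemidirectProduct.card, Nat.card_pi, Nat.card_perm]
  simp

def signedSubsetRep (t d : ℕ) :
    Representation ℂ (HyperW t) (Set.powersetCard (Fin t) d → ℂ) where
  toFun g :=
    { toFun f S := signChar (S : Finset (Fin t)) g.left * f (g.right⁻¹ • S)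
      map_add' f f' := by ext S; simp [mul_add]
      map_smul' c f := by ext S; simp [mul_left_comm] }
  map_one' := by ext f S; simp
  map_mul' g h := by
    ext f S
    simp [SemidirectProduct.mul_left, mul_smul, signChar_permAut, mul_assoc]

noncomputable def signedSubsetFDRep (t d : ℕ) : FDRep ℂ (HyperW t) :=
  FDRep.of (signedSubsetRep t d)

variable {t d : ℕ}

lemma signedSubsetRep_apply (g : HyperW t) (f : Set.powersetCard (Fin t) d → ℂ)
    (S : Set.powersetCard (Fin t) d) :
    signedSubsetRep t d g f S = signChar (S : Finset (Fin t)) g.left * f (g.right⁻¹ • S) := rfl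

lemma character_signedSubsetFDRep (g : HyperW t) :
    (signedSubsetFDRep t d).character g =
      ∑ S : Set.powersetCard (Fin t) d,
        if g.right • S = S then signChar (S : Finset (Fin t)) g.left else 0 := by
  rw [signedSubsetFDRep, FDRep.character, FDRep.of_ρ',
    LinearMap.trace_eq_sum_of_apply_eq_mul_comp _ _ _ (signedSubsetRep_apply g)]
  simp_rw [inv_smul_eq_iff, eq_comm]

lemma character_signedSubsetFDRep_inv (g : HyperW t) :
    (signedSubsetFDRep t d).character g⁻¹ =
      (signedSubsetFDRep t d).character g := by
  simp only [character_signedSubsetFDRep, SemidirectProduct.inv_right, SemidirectProduct.inv_left,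
    inv_smul_eq_iff, signChar_permAut, inv_inv, signChar_inv]
  refine sum_congr rfl fun S _ => ?_
  by_cases h : g.right • S = S
  · rw [if_pos h.symm, if_pos h, ← Set.powersetCard.coe_smul, h]
  · rw [if_neg (Ne.symm h), if_neg h]

lemma sum_character_mk_mul_self (s : Equiv.Perm (Fin t)) :
    ∑ v : Fin t → ℤˣ, (signedSubsetFDRep t d).character ⟨v, s⟩ *
      (signedSubsetFDRep t d).character ⟨v, s⟩ =
      2 ^ t * #{S : Set.powersetCard (Fin t) d | s • S = S} := by
  simp only [character_signedSubsetFDRep, ← sum_filter, sum_mul_sum]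
  rw [sum_comm]
  refine (sum_congr rfl fun S _ => sum_comm).trans ?_
  simp only [sum_signChar_mul_signChar, Fintype.card_fin, Subtype.coe_inj, sum_ite_eq]
  simp [← sum_filter, filter_filter, mul_comm]

lemma simple_signedSubsetFDRep (hd : d ≤ t) : CategoryTheory.Simple (signedSubsetFDRep t d) := by
  have : Nonempty (Set.powersetCard (Fin t) d) := by
    rw [Set.nonempty_coe_sort, Set.nonempty_iff_ne_empty, Ne, Set.powersetCard.eq_empty_iff]
    simpa using hd
  have := Set.powersetCard.isPretransitive (α := Fin t) (n := d)
  rw [FDRep.simple_iff_char_is_norm_one]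
  simp_rw [character_signedSubsetFDRep_inv]
  rw [SemidirectProduct.sum_eq_sum_sum]
  simp only [sum_character_mk_mul_self, ← mul_sum]
  rw [← Nat.cast_sum, MulAction.sum_card_filter_smul_eq_self, natCard_eq, Fintype.card_perm,
    Fintype.card_fin, Nat.cast_mul, Nat.cast_pow, Nat.cast_ofNat]

lemma sum_character_inl_mul_signChar (T : Finset (Fin t)) :
    ∑ x, (signedSubsetFDRep t d).character (SemidirectProduct.inl x) * signChar T x =
      if #T = d then 2 ^ t else 0 := by
  simp only [character_signedSubsetFDRep, SemidirectProduct.right_inl, SemidirectProduct.left_inl,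
    one_smul, if_true, sum_mul]
  rw [sum_comm]
  simp only [sum_signChar_mul_signChar, Fintype.card_fin]
  split_ifs with hT
  · rw [Fintype.sum_eq_single ⟨T, hT⟩ fun S hS => if_neg fun h => hS (Subtype.ext h),
      if_pos rfl]
  · exact sum_eq_zero fun S _ => if_neg fun h : (S : Finset (Fin t)) = T => hT (h ▸ S.2)

lemma eq_of_character_eq {d' : ℕ} (hd : d ≤ t)
    (h : (signedSubsetFDRep t d).character = (signedSubsetFDRep t d').character) : d = d' := by
  obtain ⟨T, -, hT⟩ := exists_subset_card_eq (s := (univ : Finset (Fin t))) (by simpa using hd)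
  have pairing := sum_character_inl_mul_signChar (d := d') T
  rw [← h, sum_character_inl_mul_signChar, if_pos hT] at pairing
  by_contra hne
  rw [if_neg (hT ▸ hne)] at pairing
  exact pow_ne_zero t two_ne_zero pairing

lemma card_filter_inv_mul_mul_permAut_eq_one (v : Fin t → ℤˣ) (s : Equiv.Perm (Fin t)) :
    (#{y | y⁻¹ * v * permAut t s y = 1} : ℂ) =
      ∑ S : Finset (Fin t), if s • S = S then signChar S v else 0 := by
  have indicator (w : Fin t → ℤˣ) :
      (if w = 1 then 1 else 0 : ℂ) = ((2 : ℂ) ^ t)⁻¹ * ∑ S, signChar S w := by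
    rw [sum_signChar, Fintype.card_fin]
    split_ifs <;> simp
  rw [natCast_card_filter]
  simp_rw [indicator, ← mul_sum]
  rw [sum_comm]
  have orthogonality (S : Finset (Fin t)) :
      ∑ y, signChar S y * signChar S v * signChar (s⁻¹ • S) y =
        (2 : ℂ) ^ t * if s • S = S then signChar S v else 0 := by
    simp_rw [mul_right_comm _ (signChar S v), ← sum_mul, sum_signChar_mul_signChar,
      Fintype.card_fin, eq_inv_smul_iff]
    split_ifs <;> ring
  simp only [map_mul, signChar_inv, signChar_permAut, orthogonality, ← mul_sum]
  rw [inv_mul_cancel_left₀ (pow_ne_zero t two_ne_zero)]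

lemma sum_range_character_signedSubsetFDRep (g : HyperW t) :
    ∑ d ∈ range (t + 1), (signedSubsetFDRep t d).character g =
      ∑ S : Finset (Fin t), if g.right • S = S then signChar S g.left else 0 := by
  rw [← sum_fiberwise_of_maps_to (s := univ) (t := range (t + 1)) (g := Finset.card)
    fun S _ => mem_range_succ_iff.2 (by simpa using card_le_univ S)]
  refine sum_congr rfl fun d _ => ?_
  simp only [character_signedSubsetFDRep, ← Subtype.coe_inj, Set.powersetCard.coe_smul]
  exact (sum_subtype _ (fun S => by rw [mem_filter, Set.powersetCard.mem_iff]; simp)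
    fun S : Finset (Fin t) => if g.right • S = S then signChar S g.left else 0).symm

lemma inducedCharOf_inr_one (g : HyperW t) :
    inducedCharOf (SemidirectProduct.inr : Equiv.Perm (Fin t) →* HyperW t) (fun _ => 1) g =
      ∑ d ∈ range (t + 1), (signedSubsetFDRep t d).character g := by
  rw [inducedCharOf_one_apply SemidirectProduct.inr_injective,
    SemidirectProduct.card_filter_inv_mul_mul_mem_range_inr, Nat.cast_mul,
    inv_mul_cancel_left₀ (Nat.cast_ne_zero.2 Fintype.card_ne_zero),
    card_filter_inv_mul_mul_permAut_eq_one, sum_range_character_signedSubsetFDRep]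

end HyperW

/-- `Ind_{S_t}^{W_t} 1` is the multiplicity-free sum of the distinct
irreducible characters of `W_t` labeled by the bipartitions `([c]_row, [d]_row)`
over all pairs `(c, d)` with `c + d = t`. -/
theorem inducedChar_triv_St_to_Wt (t : ℕ) :
    ∃ σ : ℕ × ℕ → (HyperW t → ℂ),
      Set.InjOn σ {p | p.1 + p.2 = t} ∧
      (∀ p : ℕ × ℕ, p.1 + p.2 = t → IsIrredChar (HyperW t) (σ p)) ∧
      inducedCharOf (SemidirectProduct.inr : Equiv.Perm (Fin t) →* HyperW t)
          (fun _ => (1 : ℂ)) =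
        ∑ᶠ p ∈ {p : ℕ × ℕ | p.1 + p.2 = t}, σ p := by
  refine ⟨fun p => (HyperW.signedSubsetFDRep t p.2).character, ?_, ?_, ?_⟩
  · rintro ⟨c, d⟩ (hcd : c + d = t) ⟨c', d'⟩ (hcd' : c' + d' = t) h
    have hd : d = d' := HyperW.eq_of_character_eq (by omega) h
    ext <;> dsimp <;> omega
  · rintro ⟨c, d⟩ hcd
    exact ⟨_, HyperW.simple_signedSubsetFDRep (by dsimp at hcd; omega), rfl⟩
  · have hset : {p : ℕ × ℕ | p.1 + p.2 = t} = ↑(antidiagonal t) := by ext; simp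
    rw [hset, finsum_mem_coe_finset, Nat.antidiagonal_eq_map', sum_map]
    funext g
    rw [Finset.sum_apply, HyperW.inducedCharOf_inr_one]
    rfl
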